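/- arXiv:cs/0609040 — 4 statements merged into one kernel-verified Lean document; each statement's English description precedes it below -/
import Mathlib

section
/- In a completely iterative algebra with compositional and functorial solutions, for flat equation morphisms e : X → HX + Y and f : Y → HY + A the solution of the combined system satisfies (f ⊞ e)† = [(f† ▹ e)†, f†] : X + Y → A. -/
open CategoryTheory Limits

universe u v

variable {C : Type u} [Category.{v} C] [HasBinaryCoproducts C]

/-- `s` is a solution of the flat equation morphism `e : X ⟶ HX + A`. -/
def IsSolution (H : C ⥤ C) {A X : C} (α : H.obj A ⟶ A) (e : X ⟶ H.obj X ⨿ A) (s : X ⟶ A) : Prop :=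
  s = e ≫ coprod.map (H.map s) (𝟙 A) ≫ coprod.desc α (𝟙 A)

/-- `h ▹ e = (id_{HX} + h) ∘ e` : renaming of parameters. -/
noncomputable def afterEq (H : C ⥤ C) {X Y Z : C} (e : X ⟶ H.obj X ⨿ Y) (h : Y ⟶ Z) :
    X ⟶ H.obj X ⨿ Z :=
  e ≫ coprod.map (𝟙 (H.obj X)) h

/-- `f ⊞ e = (can + id_A) ∘ (id_{HX} + f) ∘ [e, inr]`, with
`can = [H inl, H inr] : HX + HY ⟶ H(X+Y)`. -/
noncomputable def plusEq (H : C ⥤ C) {X Y A : C} (e : X ⟶ H.obj X ⨿ Y) (f : Y ⟶ H.obj Y ⨿ A) :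
    X ⨿ Y ⟶ H.obj (X ⨿ Y) ⨿ A :=
  coprod.desc e coprod.inr ≫
    coprod.map (𝟙 (H.obj X)) f ≫
      (coprod.associator (H.obj X) (H.obj Y) A).inv ≫
        coprod.map (coprod.desc (H.map coprod.inl) (H.map coprod.inr)) (𝟙 A)

section

variable (H : C ⥤ C) {A : C} (α : H.obj A ⟶ A)

theorem isSolution_iff {X : C} (e : X ⟶ H.obj X ⨿ A) (s : X ⟶ A) :
    IsSolution H α e s ↔ s = e ≫ coprod.desc (H.map s ≫ α) (𝟙 A) := by
  simp only [IsSolution, coprod.map_desc, Category.comp_id]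

theorem isSolution_afterEq_iff {X Y : C} (e : X ⟶ H.obj X ⨿ Y) (h : Y ⟶ A) (s : X ⟶ A) :
    IsSolution H α (afterEq H e h) s ↔ s = e ≫ coprod.desc (H.map s ≫ α) h := by
  simp only [isSolution_iff, afterEq, Category.assoc, coprod.map_desc, Category.id_comp,
    Category.comp_id]

theorem plusEq_comp_desc {X Y : C} (e : X ⟶ H.obj X ⨿ Y) (f : Y ⟶ H.obj Y ⨿ A)
    (t : X ⟶ A) (g : Y ⟶ A) :
    plusEq H e f ≫ coprod.desc (H.map (coprod.desc t g) ≫ α) (𝟙 A) =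
      coprod.desc (e ≫ coprod.desc (H.map t ≫ α) (f ≫ coprod.desc (H.map g ≫ α) (𝟙 A)))
        (f ≫ coprod.desc (H.map g ≫ α) (𝟙 A)) := by
  apply coprod.hom_ext <;>
    simp [plusEq, coprod.desc_comp, coprod.inl_desc, coprod.inr_desc, coprod.map_desc,
      ← Functor.map_comp_assoc, -Functor.map_comp]

theorem isSolution_plusEq_desc {X Y : C} {e : X ⟶ H.obj X ⨿ Y} {f : Y ⟶ H.obj Y ⨿ A}
    {fs : Y ⟶ A} (hfs : IsSolution H α f fs)
    {s : X ⟶ A} (hs : IsSolution H α (afterEq H e fs) s) :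
    IsSolution H α (plusEq H e f) (coprod.desc s fs) := by
  rw [isSolution_iff] at hfs ⊢
  rw [isSolution_afterEq_iff] at hs
  rw [plusEq_comp_desc, ← hfs, ← hs]

end

/-- In a completely iterative algebra (whose unique solutions are functorial and
compositional), `(f ⊞ e)† = [(f† ▹ e)†, f†] : X + Y ⟶ A`. -/
theorem cia_solution_plus_desc
    (H : C ⥤ C) {A : C} (α : H.obj A ⟶ A)
    (cia : ∀ (X : C) (e : X ⟶ H.obj X ⨿ A), ∃! s : X ⟶ A, IsSolution H α e s)
    {X Y : C} (e : X ⟶ H.obj X ⨿ Y) (f : Y ⟶ H.obj Y ⨿ A)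
    (fs : Y ⟶ A) (hfs : IsSolution H α f fs)
    (s₁ : X ⟶ A) (hs₁ : IsSolution H α (afterEq H e fs) s₁)
    (s₂ : X ⨿ Y ⟶ A) (hs₂ : IsSolution H α (plusEq H e f) s₂) :
    s₂ = coprod.desc s₁ fs :=
  (cia _ (plusEq H e f)).unique hs₂ (isSolution_plusEq_desc H α hfs hs₁)
end

section
/- Let H : CMS → CMS be ε-contracting (ε < 1), A a nonempty H-algebra, and e : X → HX + A a flat equation morphism. Define e†₀ : X → A to be any nonexpanding map and e†_{n+1} = [α, id] ∘ (He†_n + id) ∘ e. Then (e†_n) is a Cauchy sequence in the sup metric and its limit is the unique solution of e. -/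
open scoped NNReal

/-- An object of the category `CMS` of complete metric spaces with metrics
bounded by `1`, and nonexpanding maps. -/
structure CMSObj : Type 1 where
  carrier : Type
  [metric : MetricSpace carrier]
  [complete : CompleteSpace carrier]
  bounded : ∀ x y : carrier, dist x y ≤ 1

attribute [instance] CMSObj.metric CMSObj.complete

instance : CoeSort CMSObj Type := ⟨CMSObj.carrier⟩

/-- A morphism of `CMS`: a nonexpanding (`1`-Lipschitz) map. -/
def CMSHom (X Y : CMSObj) : Type := {f : X.carrier → Y.carrier // LipschitzWith 1 f}

/-- Identity morphism of `CMS`. -/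
def CMSHom.id (X : CMSObj) : CMSHom X X := ⟨fun x => x, LipschitzWith.id⟩

/-- Composition of morphisms of `CMS`. -/
def CMSHom.comp {X Y Z : CMSObj} (g : CMSHom Y Z) (f : CMSHom X Y) : CMSHom X Z :=
  ⟨g.1 ∘ f.1, by simpa using g.2.comp f.2⟩

/-- The sup (pointwise) metric on the hom-set `CMS(X, Y)`:
`d(f, g) = sup_x d(f x, g x)`. -/
noncomputable def homDist {X Y : CMSObj} (f g : CMSHom X Y) : ℝ :=
  ⨆ x : X.carrier, dist (f.1 x) (g.1 x)

/-- The carrier of the coproduct `X + Y` in `CMS` (a type synonym for the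
disjoint union). -/
def SumCarrier (X Y : CMSObj) : Type := X.carrier ⊕ Y.carrier

/-- The distance on the coproduct `X + Y` in `CMS`: within each summand the
given distances, across the summands the distance is `1`. -/
def sumDist (X Y : CMSObj) : SumCarrier X Y → SumCarrier X Y → ℝ
  | .inl a, .inl b => dist a b
  | .inr a, .inr b => dist a b
  | _, _ => 1

/-- The metric of the coproduct `X + Y` in `CMS`. -/
noncomputable def sumMetric (X Y : CMSObj) : MetricSpace (SumCarrier X Y) where
  dist := sumDist X Y
  dist_self := by rintro (a | a) <;> simp [sumDist]
  dist_comm := by rintro (a | a) (b | b) <;> simp [sumDist, dist_comm]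
  dist_triangle := by
    rintro (a | a) (b | b) (c | c) <;> simp only [sumDist]
    · exact dist_triangle a b c
    · linarith [dist_nonneg (x := a) (y := b)]
    · linarith [X.bounded a c]
    · linarith [dist_nonneg (x := b) (y := c)]
    · linarith [dist_nonneg (x := b) (y := c)]
    · linarith [Y.bounded a c]
    · linarith [dist_nonneg (x := a) (y := b)]
    · exact dist_triangle a b c
  eq_of_dist_eq_zero := by
    rintro (a | a) (b | b) h
    · simp only [sumDist] at h; exact congrArg Sum.inl (eq_of_dist_eq_zero h)
    · simp only [sumDist] at h; norm_num at h
    · simp only [sumDist] at h; norm_num at h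
    · simp only [sumDist] at h; exact congrArg Sum.inr (eq_of_dist_eq_zero h)

/-- Coproduct injections of `CMS`, as functions. -/
def sumInl (X Y : CMSObj) : X.carrier → SumCarrier X Y := Sum.inl

/-- Coproduct injections of `CMS`, as functions. -/
def sumInr (X Y : CMSObj) : Y.carrier → SumCarrier X Y := Sum.inr

theorem sumComplete (X Y : CMSObj) :
    @CompleteSpace _ (sumMetric X Y).toUniformSpace := by
  letI : MetricSpace (SumCarrier X Y) := sumMetric X Y
  have hisoL : Isometry (sumInl X Y) :=
    Isometry.of_dist_eq fun a b => rfl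
  have hisoR : Isometry (sumInr X Y) :=
    Isometry.of_dist_eq fun a b => rfl
  have hL : IsComplete (Set.range (sumInl X Y)) :=
    hisoL.isUniformInducing.isComplete_range
  have hR : IsComplete (Set.range (sumInr X Y)) :=
    hisoR.isUniformInducing.isComplete_range
  refine completeSpace_iff_isComplete_univ.mpr ?_
  have hu : (Set.range (sumInl X Y) ∪ Set.range (sumInr X Y)) = Set.univ := by
    ext z
    simp only [Set.mem_union, Set.mem_range, Set.mem_univ, iff_true]
    cases z with
    | inl a => exact Or.inl ⟨a, rfl⟩
    | inr b => exact Or.inr ⟨b, rfl⟩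
  rw [← hu]
  exact hL.union hR

/-- The coproduct `X + Y` in `CMS`. -/
noncomputable def CMSObj.sum (X Y : CMSObj) : CMSObj where
  carrier := SumCarrier X Y
  metric := sumMetric X Y
  complete := sumComplete X Y
  bounded := by
    rintro (a | a) (b | b)
    · exact X.bounded a b
    · exact le_refl 1
    · exact le_refl 1
    · exact Y.bounded a b

/-- An endofunctor of the category `CMS`. -/
structure CMSFunctor : Type 1 where
  obj : CMSObj → CMSObj
  map : ∀ {X Y : CMSObj}, CMSHom X Y → CMSHom (obj X) (obj Y)
  map_id : ∀ X : CMSObj, map (CMSHom.id X) = CMSHom.id (obj X)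
  map_comp : ∀ {X Y Z : CMSObj} (f : CMSHom X Y) (g : CMSHom Y Z),
    map (g.comp f) = (map g).comp (map f)

/-- `H` is `ε`-contracting: `d(Hf, Hg) ≤ ε·d(f, g)` in the sup metric, for all
parallel pairs `f, g`. -/
def CMSFunctor.Contracting (H : CMSFunctor) (ε : ℝ) : Prop :=
  ∀ (X Y : CMSObj) (f g : CMSHom X Y), homDist (H.map f) (H.map g) ≤ ε * homDist f g

/-- `s` is a solution of the flat equation morphism `e : X ⟶ HX + A` in the
`H`-algebra `(A, α)`: `s = [α, id] ∘ (Hs + id) ∘ e`. -/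
def CMSSol (H : CMSFunctor) {A : CMSObj} (α : CMSHom (H.obj A) A) {X : CMSObj}
    (e : CMSHom X (CMSObj.sum (H.obj X) A)) (s : CMSHom X A) : Prop :=
  ∀ x, s.1 x = Sum.elim (fun h => α.1 ((H.map s).1 h)) (fun a => a) (e.1 x)

/-- Copairing `[f, g]` of nonexpanding maps on the coproduct. -/
noncomputable def cmsElim {X Y Z : CMSObj} (f : CMSHom X Z) (g : CMSHom Y Z) :
    CMSHom (CMSObj.sum X Y) Z :=
  ⟨Sum.elim f.1 g.1, by
    apply LipschitzWith.of_dist_le_mul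
    rintro (a | a) (b | b)
    · exact f.2.dist_le_mul a b
    · exact le_trans (Z.bounded (f.1 a) (g.1 b))
        (le_of_eq (by norm_num : (1 : ℝ) = ((1 : NNReal) : ℝ) * 1))
    · exact le_trans (Z.bounded (g.1 a) (f.1 b))
        (le_of_eq (by norm_num : (1 : ℝ) = ((1 : NNReal) : ℝ) * 1))
    · exact g.2.dist_le_mul a b⟩

/-- The map `F : s ↦ [α, id] ∘ (Hs + id) ∘ e` on `CMS(X, A)`. -/
noncomputable def cmsEqFun (H : CMSFunctor) {A : CMSObj} (α : CMSHom (H.obj A) A)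
    {X : CMSObj} (e : CMSHom X (CMSObj.sum (H.obj X) A)) (s : CMSHom X A) :
    CMSHom X A :=
  CMSHom.comp (cmsElim (CMSHom.comp α (H.map s)) (CMSHom.id A)) e

/-- The approximations `e†₀ = s₀`, `e†_{n+1} = [α, id] ∘ (H e†_n + id) ∘ e`. -/
noncomputable def cmsIter (H : CMSFunctor) {A : CMSObj} (α : CMSHom (H.obj A) A)
    {X : CMSObj} (e : CMSHom X (CMSObj.sum (H.obj X) A)) (s₀ : CMSHom X A) :
    ℕ → CMSHom X A
  | 0 => s₀
  | n + 1 => cmsEqFun H α e (cmsIter H α e s₀ n)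

/-! The hom-set `CMS(X, A)` with the sup metric is a complete metric space: it sits
isometrically inside the bounded continuous functions `X →ᵇ A` as the closed subset of
`1`-Lipschitz maps. Postcomposition, precomposition and copairing are nonexpanding for the sup
metric, so `s ↦ [α, id] ∘ (Hs + id) ∘ e` inherits the contraction constant `ε` of `H`. Its fixed
points are the solutions of `e` and the `e†_n` are its iterates, so Banach's fixed point
theorem applies. -/

open Filter Topology BoundedContinuousFunction Function

namespace CMSHom

variable {X Y Z : CMSObj}

def toBCF (f : CMSHom X Y) : X →ᵇ Y :=
  mkOfBound ⟨f.1, f.2.continuous⟩ 1 fun _ _ => Y.bounded _ _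

lemma toBCF_injective : Injective (toBCF : CMSHom X Y → X →ᵇ Y) := fun _ _ h =>
  Subtype.ext (funext fun x => DFunLike.congr_fun h x)

noncomputable instance : MetricSpace (CMSHom X Y) :=
  MetricSpace.induced toBCF toBCF_injective inferInstance

lemma dist_eq_homDist (f g : CMSHom X Y) : dist f g = homDist f g :=
  BoundedContinuousFunction.dist_eq_iSup

lemma isometry_toBCF : Isometry (toBCF : CMSHom X Y → X →ᵇ Y) :=
  Isometry.of_dist_eq fun _ _ => rfl

lemma range_toBCF :
    Set.range (toBCF : CMSHom X Y → X →ᵇ Y) = {g : X →ᵇ Y | LipschitzWith 1 g} := by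
  ext g
  refine ⟨?_, fun hg => ⟨⟨g, hg⟩, rfl⟩⟩
  rintro ⟨f, rfl⟩
  exact f.2

instance : CompleteSpace (CMSHom X Y) := by
  rw [completeSpace_iff_isComplete_range isometry_toBCF.isUniformInducing, range_toBCF]
  exact ((isClosed_setOfPred_lipschitzWith (α := X) (β := Y) 1).preimage
    continuous_coe).isComplete

lemma dist_apply_le (f g : CMSHom X Y) (x : X) : dist (f.1 x) (g.1 x) ≤ dist f g :=
  dist_coe_le_dist (f := toBCF f) (g := toBCF g) x

lemma dist_le_of_forall {f g : CMSHom X Y} {C : ℝ} (hC : 0 ≤ C)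
    (h : ∀ x, dist (f.1 x) (g.1 x) ≤ C) : dist f g ≤ C :=
  (BoundedContinuousFunction.dist_le hC).2 h

lemma dist_comp_left_le (h : CMSHom Y Z) (f g : CMSHom X Y) :
    dist (h.comp f) (h.comp g) ≤ dist f g :=
  dist_le_of_forall dist_nonneg fun x =>
    (h.2.dist_le_mul _ _).trans (by simpa using dist_apply_le f g x)

lemma dist_comp_right_le (f g : CMSHom Y Z) (h : CMSHom X Y) :
    dist (f.comp h) (g.comp h) ≤ dist f g :=
  dist_le_of_forall dist_nonneg fun x => dist_apply_le f g (h.1 x)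

lemma tendsto_iff_tendstoUniformly {ι : Type*} {F : ι → CMSHom X Y} {f : CMSHom X Y}
    {l : Filter ι} : Tendsto F l (𝓝 f) ↔ TendstoUniformly (fun i => (F i).1) f.1 l := by
  rw [isometry_toBCF.isEmbedding.tendsto_nhds_iff]
  exact BoundedContinuousFunction.tendsto_iff_tendstoUniformly

end CMSHom

open CMSHom

lemma dist_cmsElim_le {X Y Z : CMSObj} (f f' : CMSHom X Z) (g : CMSHom Y Z) :
    dist (cmsElim f g) (cmsElim f' g) ≤ dist f f' := by
  refine dist_le_of_forall dist_nonneg ?_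
  rintro (x | y)
  · exact dist_apply_le f f' x
  · simp [cmsElim]

lemma CMSFunctor.Contracting.dist_map_le {H : CMSFunctor} {ε : ℝ} (hH : H.Contracting ε)
    {X Y : CMSObj} (f g : CMSHom X Y) :
    dist (H.map f) (H.map g) ≤ ε.toNNReal * dist f g := by
  have h := hH X Y f g
  rw [← dist_eq_homDist, ← dist_eq_homDist] at h
  rw [Real.coe_toNNReal']
  exact h.trans (mul_le_mul_of_nonneg_right (le_max_left _ _) dist_nonneg)

section EquationMorphism

variable {H : CMSFunctor} {A : CMSObj} (α : CMSHom (H.obj A) A) {X : CMSObj}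
  (e : CMSHom X (CMSObj.sum (H.obj X) A))

lemma contractingWith_cmsEqFun {ε : ℝ} (hε : ε < 1) (hH : H.Contracting ε) :
    ContractingWith ε.toNNReal (cmsEqFun H α e) := by
  refine ⟨Real.toNNReal_lt_one.2 hε, LipschitzWith.of_dist_le_mul fun s t => ?_⟩
  calc dist (cmsEqFun H α e s) (cmsEqFun H α e t)
      ≤ dist (α.comp (H.map s)) (α.comp (H.map t)) :=
        (dist_comp_right_le _ _ e).trans (dist_cmsElim_le _ _ _)
    _ ≤ dist (H.map s) (H.map t) := dist_comp_left_le α _ _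
    _ ≤ ε.toNNReal * dist s t := hH.dist_map_le s t

lemma cmsSol_iff_isFixedPt (s : CMSHom X A) :
    CMSSol H α e s ↔ IsFixedPt (cmsEqFun H α e) s :=
  ⟨fun h => Subtype.ext (funext fun x => (h x).symm),
    fun h x => congrFun (congrArg Subtype.val h.symm) x⟩

lemma cmsIter_eq_iterate (s₀ : CMSHom X A) :
    cmsIter H α e s₀ = fun n => (cmsEqFun H α e)^[n] s₀ := by
  funext n
  induction n with
  | zero => rfl
  | succ n ih => rw [iterate_succ_apply', ← ih]; rfl

end EquationMorphism

theorem cms_iterates_cauchy_limit_unique_solution_general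
    (H : CMSFunctor) (ε : ℝ) (hε : ε < 1) (hcontr : H.Contracting ε)
    (A : CMSObj) (α : CMSHom (H.obj A) A)
    (X : CMSObj) (e : CMSHom X (CMSObj.sum (H.obj X) A)) (s₀ : CMSHom X A) :
    (∀ δ : ℝ, 0 < δ → ∃ N, ∀ m ≥ N, ∀ n ≥ N,
      homDist (cmsIter H α e s₀ m) (cmsIter H α e s₀ n) < δ) ∧
    ∃ s : CMSHom X A,
      TendstoUniformly (fun n => (cmsIter H α e s₀ n).1) s.1 Filter.atTop ∧
      CMSSol H α e s ∧ ∀ t, CMSSol H α e t → t = s := by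
  have : Nonempty (CMSHom X A) := ⟨s₀⟩
  have hF := contractingWith_cmsEqFun α e hε hcontr
  have hlim : Tendsto (cmsIter H α e s₀) atTop (𝓝 (ContractingWith.fixedPoint _ hF)) := by
    rw [cmsIter_eq_iterate]
    exact hF.tendsto_iterate_fixedPoint s₀
  refine ⟨fun δ hδ => ?_, _, tendsto_iff_tendstoUniformly.1 hlim,
    (cmsSol_iff_isFixedPt α e _).2 hF.fixedPoint_isFixedPt,
    fun t ht => hF.fixedPoint_unique ((cmsSol_iff_isFixedPt α e t).1 ht)⟩
  obtain ⟨N, hN⟩ := Metric.cauchySeq_iff.1 hlim.cauchySeq δ hδ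
  exact ⟨N, fun m hm n hn => dist_eq_homDist _ _ ▸ hN m hm n hn⟩

/-- Let `H : CMS → CMS` be `ε`-contracting (`ε < 1`), `A` a nonempty
`H`-algebra and `e : X → HX + A` a flat equation morphism.  Starting from any
nonexpanding `e†₀ = s₀` and setting `e†_{n+1} = [α, id] ∘ (H e†_n + id) ∘ e`,
the sequence `(e†_n)` is Cauchy in the sup metric and its (uniform) limit is
the unique solution of `e`. -/
theorem cms_iterates_cauchy_limit_unique_solution
    (H : CMSFunctor) (ε : ℝ) (hε : ε < 1) (hcontr : H.Contracting ε)
    (A : CMSObj) (hA : Nonempty A.carrier) (α : CMSHom (H.obj A) A)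
    (X : CMSObj) (e : CMSHom X (CMSObj.sum (H.obj X) A)) (s₀ : CMSHom X A) :
    (∀ δ : ℝ, 0 < δ → ∃ N, ∀ m ≥ N, ∀ n ≥ N,
      homDist (cmsIter H α e s₀ m) (cmsIter H α e s₀ n) < δ) ∧
    ∃ s : CMSHom X A,
      TendstoUniformly (fun n => (cmsIter H α e s₀ n).1) s.1 Filter.atTop ∧
      CMSSol H α e s ∧ ∀ t, CMSSol H α e t → t = s :=
  cms_iterates_cauchy_limit_unique_solution_general H ε hε hcontr A α X e s₀
end

section
/- If (TY, τ_Y, (-)†) is a free complete Elgot algebra on Y with universal arrow η_Y : Y → TY, then [τ_Y, η_Y] : HTY + Y → TY is an isomorphism. -/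
open CategoryTheory Limits

universe u v

variable {C : Type u} [Category.{v} C] [HasBinaryCoproducts C]

/-- A complete Elgot algebra for `H`: an `H`-algebra `(A, α)` together with a
choice of solution for every flat equation morphism, satisfying functoriality
and compositionality. -/
structure CompleteElgotStr (H : C ⥤ C) (A : C) (α : H.obj A ⟶ A) where
  sol : ∀ {X : C}, (X ⟶ H.obj X ⨿ A) → (X ⟶ A)
  isSol : ∀ {X : C} (e : X ⟶ H.obj X ⨿ A), IsSolution H α e (sol e)
  functorial : ∀ {X Y : C} (e : X ⟶ H.obj X ⨿ A) (f : Y ⟶ H.obj Y ⨿ A) (h : X ⟶ Y),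
    e ≫ coprod.map (H.map h) (𝟙 A) = h ≫ f → sol e = h ≫ sol f
  compositional : ∀ {X Y : C} (e : X ⟶ H.obj X ⨿ Y) (f : Y ⟶ H.obj Y ⨿ A),
    sol (afterEq H e (sol f)) = coprod.inl ≫ sol (plusEq H e f)

/-- `h : A ⟶ B` preserves solutions: `h ∘ e† = (h ▹ e)‡` for every flat
equation morphism `e` in `A`. -/
def SolPreserving {H : C ⥤ C} {A B : C} {α : H.obj A ⟶ A} {β : H.obj B ⟶ B}
    (EA : CompleteElgotStr H A α) (EB : CompleteElgotStr H B β) (h : A ⟶ B) : Prop :=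
  ∀ (X : C) (e : X ⟶ H.obj X ⨿ A), EA.sol e ≫ h = EB.sol (afterEq H e h)

/-!
`HA + Y` is a complete Elgot algebra under `inl ∘ H[α, m]`: an equation in `HA + Y` is solved
in `A` after renaming along `[α, m]`, and `H` of that solution is pushed back via `inl`. This
makes `[α, m]` solution-preserving. For the free algebra, the universal `h : TY ⟶ HTY + Y`
with `η ≫ h = inr` then gives `h ≫ [τ, η] = 𝟙` by freeness, and `[τ, η] ≫ h = 𝟙` because
solution-preserving maps are algebra homomorphisms, as one sees by solving the equation
`[inl ∘ H inr, inr] : HA + A ⟶ H(HA + A) + A`, whose solution is `[α, 𝟙]`.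
-/

attribute [local simp] coprod.inl_desc coprod.inr_desc coprod.inl_desc_assoc coprod.inr_desc_assoc

section Equations

variable {H : C ⥤ C}

@[simp]
lemma afterEq_id {X Y : C} (e : X ⟶ H.obj X ⨿ Y) : afterEq H e (𝟙 Y) = e := by
  simp [afterEq]

lemma afterEq_afterEq {X Y Z W : C} (e : X ⟶ H.obj X ⨿ Y) (f : Y ⟶ Z) (g : Z ⟶ W) :
    afterEq H (afterEq H e f) g = afterEq H e (f ≫ g) := by
  simp [afterEq]

lemma afterEq_plusEq {X Y A B : C} (e : X ⟶ H.obj X ⨿ Y) (f : Y ⟶ H.obj Y ⨿ A) (g : A ⟶ B) :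
    afterEq H (plusEq H e f) g = plusEq H e (afterEq H f g) := by
  unfold afterEq plusEq
  simp only [Category.assoc]
  congr 1
  ext <;> simp

lemma inl_plusEq {X Y A : C} (e : X ⟶ H.obj X ⨿ Y) (f : Y ⟶ H.obj Y ⨿ A) :
    coprod.inl ≫ plusEq H e f =
      e ≫ coprod.desc (H.map coprod.inl ≫ coprod.inl)
        (f ≫ coprod.map (H.map coprod.inr) (𝟙 A)) := by
  unfold plusEq
  simp only [coprod.inl_desc_assoc]
  congr 1
  ext
  · simp
  · simp only [coprod.inr_map_assoc, coprod.inr_desc]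
    congr 1
    ext <;> simp

noncomputable def algebraEq (H : C ⥤ C) (A : C) : H.obj A ⨿ A ⟶ H.obj (H.obj A ⨿ A) ⨿ A :=
  coprod.desc (H.map coprod.inr ≫ coprod.inl) coprod.inr

lemma eq_desc_of_isSolution_afterEq_algebraEq {A B : C} {β : H.obj B ⟶ B} {h : A ⟶ B}
    {s : H.obj A ⨿ A ⟶ B} (hs : IsSolution H β (afterEq H (algebraEq H A) h) s) :
    s = coprod.desc (H.map h ≫ β) h := by
  have hinr : coprod.inr ≫ s = h := by
    rw [hs]
    simp [algebraEq, afterEq]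
  ext
  · rw [hs]
    simp [algebraEq, afterEq, ← Functor.map_comp_assoc, hinr]
  · simpa using hinr

end Equations

namespace SolPreserving

variable {H : C ⥤ C} {A B D : C} {α : H.obj A ⟶ A} {β : H.obj B ⟶ B} {δ : H.obj D ⟶ D}
  {EA : CompleteElgotStr H A α} {EB : CompleteElgotStr H B β} {ED : CompleteElgotStr H D δ}

protected lemma id (EA : CompleteElgotStr H A α) : SolPreserving EA EA (𝟙 A) := by
  intro X e
  simp

lemma comp {f : A ⟶ B} {g : B ⟶ D} (hf : SolPreserving EA EB f) (hg : SolPreserving EB ED g) :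
    SolPreserving EA ED (f ≫ g) := by
  intro X e
  rw [← Category.assoc, hf, hg, afterEq_afterEq]

lemma algebra_hom {h : A ⟶ B} (hh : SolPreserving EA EB h) : α ≫ h = H.map h ≫ β := by
  have hA : EA.sol (algebraEq H A) = coprod.desc α (𝟙 A) := by
    simpa using eq_desc_of_isSolution_afterEq_algebraEq (h := 𝟙 A) (by simpa using EA.isSol _)
  have hB := eq_desc_of_isSolution_afterEq_algebraEq (EB.isSol (afterEq H (algebraEq H A) h))
  simpa [hA] using coprod.inl ≫= (hh _ (algebraEq H A)).trans hB

end SolPreserving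

namespace CompleteElgotStr

variable {H : C ⥤ C} {A : C} {α : H.obj A ⟶ A} (E : CompleteElgotStr H A α)

lemma sol_eq_inr_comp_sol_plusEq {X Y : C} (e : X ⟶ H.obj X ⨿ Y) (f : Y ⟶ H.obj Y ⨿ A) :
    E.sol f = coprod.inr ≫ E.sol (plusEq H e f) := by
  apply E.functorial
  unfold plusEq
  simp only [coprod.inr_desc_assoc, coprod.inr_map_assoc]
  congr 1
  ext <;> simp

variable {Y : C} (m : Y ⟶ A)

noncomputable def coprodSol {X : C} (e : X ⟶ H.obj X ⨿ (H.obj A ⨿ Y)) : X ⟶ H.obj A ⨿ Y :=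
  e ≫ coprod.desc (H.map (E.sol (afterEq H e (coprod.desc α m))) ≫ coprod.inl) (𝟙 _)

lemma coprodSol_comp_desc {X : C} (e : X ⟶ H.obj X ⨿ (H.obj A ⨿ Y)) :
    E.coprodSol m e ≫ coprod.desc α m = E.sol (afterEq H e (coprod.desc α m)) := by
  conv_rhs => rw [E.isSol (afterEq H e (coprod.desc α m))]
  unfold coprodSol afterEq
  simp only [Category.assoc]
  congr 1
  ext <;> simp

lemma coprodSol_isSolution {X : C} (e : X ⟶ H.obj X ⨿ (H.obj A ⨿ Y)) :
    IsSolution H (H.map (coprod.desc α m) ≫ coprod.inl) e (E.coprodSol m e) := by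
  unfold IsSolution
  conv_lhs => rw [coprodSol]
  congr 1
  apply coprod.hom_ext
  · simp [← coprodSol_comp_desc]
  · simp

lemma coprodSol_functorial {X X' : C} (e : X ⟶ H.obj X ⨿ (H.obj A ⨿ Y))
    (f : X' ⟶ H.obj X' ⨿ (H.obj A ⨿ Y)) (k : X ⟶ X')
    (hk : e ≫ coprod.map (H.map k) (𝟙 _) = k ≫ f) :
    E.coprodSol m e = k ≫ E.coprodSol m f := by
  have hsol : E.sol (afterEq H e (coprod.desc α m)) =
      k ≫ E.sol (afterEq H f (coprod.desc α m)) := by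
    apply E.functorial
    simp only [afterEq, Category.assoc, coprod.map_map, Category.id_comp, Category.comp_id]
    rw [← Category.assoc, ← hk]
    simp
  unfold coprodSol
  rw [hsol, ← reassoc_of% hk]
  congr 1
  ext <;> simp

lemma coprodSol_compositional {X X' : C} (e : X ⟶ H.obj X ⨿ X')
    (f : X' ⟶ H.obj X' ⨿ (H.obj A ⨿ Y)) :
    E.coprodSol m (afterEq H e (E.coprodSol m f)) = coprod.inl ≫ E.coprodSol m (plusEq H e f) := by
  have hrename : afterEq H (afterEq H e (E.coprodSol m f)) (coprod.desc α m) =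
      afterEq H e (E.sol (afterEq H f (coprod.desc α m))) := by
    rw [afterEq_afterEq, coprodSol_comp_desc]
  have hinr := E.sol_eq_inr_comp_sol_plusEq e (afterEq H f (coprod.desc α m))
  rw [coprodSol, hrename, E.compositional]
  conv_rhs => rw [coprodSol, afterEq_plusEq, ← Category.assoc, inl_plusEq]
  rw [coprodSol, hinr]
  simp only [afterEq, Category.assoc]
  congr 1
  apply coprod.hom_ext <;> simp [Functor.map_comp]

noncomputable def coprodExt :
    CompleteElgotStr H (H.obj A ⨿ Y) (H.map (coprod.desc α m) ≫ coprod.inl) where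
  sol := E.coprodSol m
  isSol := E.coprodSol_isSolution m
  functorial := E.coprodSol_functorial m
  compositional := E.coprodSol_compositional m

lemma solPreserving_desc_coprodExt : SolPreserving (E.coprodExt m) E (coprod.desc α m) :=
  fun _ => E.coprodSol_comp_desc m

end CompleteElgotStr

/-- If `(TY, τ, †)` is a free complete Elgot algebra on `Y` with universal arrow
`η : Y ⟶ TY`, then `[τ, η] : HTY + Y ⟶ TY` is an isomorphism. -/
theorem free_elgot_algebra_iso (H : C ⥤ C) {Y TY : C}
    (τ : H.obj TY ⟶ TY) (E : CompleteElgotStr H TY τ) (η : Y ⟶ TY)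
    (free : ∀ (A : C) (α : H.obj A ⟶ A) (EA : CompleteElgotStr H A α) (m : Y ⟶ A),
      ∃! h : TY ⟶ A, SolPreserving E EA h ∧ η ≫ h = m) :
    IsIso (coprod.desc τ η) := by
  obtain ⟨h, ⟨hh, hη⟩, -⟩ := free _ _ (E.coprodExt η) coprod.inr
  obtain ⟨k, -, hk⟩ := free TY τ E η
  have hsection : h ≫ coprod.desc τ η = 𝟙 TY := by
    rw [hk _ ⟨hh.comp (E.solPreserving_desc_coprodExt η), by simp [reassoc_of% hη]⟩,
      hk _ ⟨SolPreserving.id E, Category.comp_id η⟩]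
  have hretraction : coprod.desc τ η ≫ h = 𝟙 _ := by
    ext
    · simp [hh.algebra_hom, ← Functor.map_comp_assoc, hsection]
    · simp [hη]
  exact ⟨h, hretraction, hsection⟩
end

section
/- Every complete lattice A is a complete Elgot algebra for the Set functor HX = X × X: defining α : TA → A to send a (possibly infinite) binary tree with leaves labelled in A to the join of all its leaf labels, and assigning to each flat equation morphism e : X → X × X + A the map α ∘ ê, where ê is the unique solution of e in the free completely iterative algebra TA of all binary trees over A, yields a choice of solutions satisfying functoriality and compositionality. -/
/-- The polynomial functor whose final-coalgebra construction gives all (finite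
and infinite) binary trees with leaves labelled in `A`:
`X ↦ (X × X) ⊕ A`. -/
def treeP (A : Type) : PFunctor.{0} :=
  ⟨Unit ⊕ A, fun s => match s with | .inl _ => Bool | .inr _ => Empty⟩

/-- The type of all (finite and infinite) binary trees with leaves labelled
in `A`: the final coalgebra `TA` for `H(-) + A`, `H X = X × X`. -/
def BTree (A : Type) : Type := (treeP A).M

/-- The coalgebra structure corresponding to a flat equation morphism
`e : X → (X × X) ⊕ A`. -/
def treeStep {A X : Type} (e : X → (X × X) ⊕ A) (x : X) : (treeP A).Obj X :=
  match e x with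
  | .inl p => ⟨.inl (), fun (b : Bool) => if b then p.1 else p.2⟩
  | .inr a => ⟨.inr a, Empty.elim⟩

/-- `treeSol e : X → TA` is the unique solution `ê` of the flat equation
morphism `e` in the free completely iterative algebra `TA` of binary trees:
the unique homomorphism into the final coalgebra. -/
def treeSol {A X : Type} (e : X → (X × X) ⊕ A) : X → BTree A :=
  PFunctor.M.corec (treeStep e)

/-- `IsLeaf t a` : `a` is the label of some leaf of the binary tree `t`. -/
inductive IsLeaf {A : Type} : BTree A → A → Prop
  | leaf (t : BTree A) (a : A) : (PFunctor.M.dest t).fst = Sum.inr a → IsLeaf t a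
  | node (t : BTree A) (a : A) (b : (treeP A).B (PFunctor.M.dest t).fst) :
      IsLeaf ((PFunctor.M.dest t).snd b) a → IsLeaf t a

/-- The combined flat equation morphism `f ⊞ e : X ⊕ Y → ((X ⊕ Y) × (X ⊕ Y)) ⊕ A`
for `H X = X × X` on `Set`. -/
def prodPlus {X Y A : Type} (e : X → (X × X) ⊕ Y) (f : Y → (Y × Y) ⊕ A) :
    X ⊕ Y → ((X ⊕ Y) × (X ⊕ Y)) ⊕ A :=
  Sum.elim
    (fun x => Sum.elim (fun p => Sum.inl (Sum.inl p.1, Sum.inl p.2))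
      (fun y => Sum.map (Prod.map Sum.inr Sum.inr) id (f y)) (e x))
    (fun y => Sum.map (Prod.map Sum.inr Sum.inr) id (f y))

/-- A complete Elgot algebra structure on the algebra `(A, α)` for
`H X = X × X` on `Set`: chosen solutions of all flat equation morphisms,
satisfying functoriality and compositionality. -/
structure ProdCompleteElgot (A : Type) (α : A × A → A) where
  sol : ∀ (X : Type), (X → (X × X) ⊕ A) → (X → A)
  isSol : ∀ (X : Type) (e : X → (X × X) ⊕ A) (x : X),
    sol X e x = Sum.elim (fun p => α (sol X e p.1, sol X e p.2)) id (e x)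
  functorial : ∀ (X Y : Type) (e : X → (X × X) ⊕ A) (f : Y → (Y × Y) ⊕ A)
    (h : X → Y), (∀ x, Sum.map (Prod.map h h) id (e x) = f (h x)) →
      ∀ x, sol X e x = sol Y f (h x)
  compositional : ∀ (X Y : Type) (e : X → (X × X) ⊕ Y) (f : Y → (Y × Y) ⊕ A)
    (x : X),
    sol X (fun x' => Sum.map id (sol Y f) (e x')) x =
      sol (X ⊕ Y) (prodPlus e f) (Sum.inl x)

/-! A label is a leaf of `ê x` iff it is reached from `x` after finitely many unfoldings of `e`
(`IsLeafOf e x`): reachability is preserved and reflected by morphisms of flat equations, and `ê`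
is such a morphism into the tree coalgebra. So the solution is the join of the reachable labels.
One unfolding step turns this join into a binary join (the solution property), functoriality is
the invariance of reachability under morphisms, and since reachability for `prodPlus e f` is that
of `e` followed by that of `f`, compositionality says that a join of joins is the join of the
union. -/

section FlatEquation
variable {X Y B : Type}

inductive IsLeafOf (e : X → (X × X) ⊕ B) : X → B → Prop
  | leaf {x : X} {b : B} : e x = .inr b → IsLeafOf e x b
  | node {x y : X} {p : X × X} {b : B} :
      e x = .inl p → (y = p.1 ∨ y = p.2) → IsLeafOf e y b → IsLeafOf e x b

theorem isLeafOf_iff {e : X → (X × X) ⊕ B} {x : X} {b : B} :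
    IsLeafOf e x b ↔
      Sum.elim (fun p => IsLeafOf e p.1 b ∨ IsLeafOf e p.2 b) (· = b) (e x) := by
  constructor
  · rintro (hx | ⟨hx, rfl | rfl, hy⟩) <;> simp [*]
  · cases hx : e x with
    | inl p => rintro (hy | hy); exacts [.node hx (.inl rfl) hy, .node hx (.inr rfl) hy]
    | inr a => rintro rfl; exact .leaf hx

theorem isLeafOf_congr {e : X → (X × X) ⊕ B} {x x' : X} (h : e x = e x') {b : B} :
    IsLeafOf e x b ↔ IsLeafOf e x' b := by
  rw [isLeafOf_iff, h, ← isLeafOf_iff]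

theorem setOf_isLeafOf_of_inl {e : X → (X × X) ⊕ B} {x : X} {p : X × X} (hx : e x = .inl p) :
    {b | IsLeafOf e x b} = {b | IsLeafOf e p.1 b} ∪ {b | IsLeafOf e p.2 b} := by
  ext b; rw [Set.mem_ofPred_eq, isLeafOf_iff, hx]; rfl

theorem setOf_isLeafOf_of_inr {e : X → (X × X) ⊕ B} {x : X} {a : B} (hx : e x = .inr a) :
    {b | IsLeafOf e x b} = {a} := by
  ext b; rw [Set.mem_ofPred_eq, isLeafOf_iff, hx]; exact eq_comm

theorem isLeafOf_iff_of_hom {e : X → (X × X) ⊕ B} {f : Y → (Y × Y) ⊕ B} {h : X → Y}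
    (hc : ∀ x, Sum.map (Prod.map h h) id (e x) = f (h x)) {x : X} {b : B} :
    IsLeafOf f (h x) b ↔ IsLeafOf e x b := by
  constructor
  · generalize hy : h x = y
    intro hf
    induction hf generalizing x with
    | leaf hb =>
      subst hy
      have hex := hc x
      rw [hb] at hex
      cases hx : e x with
      | inl p => simp [hx] at hex
      | inr a => exact .leaf (by simpa [hx] using hex)
    | node hq hy' _ ih =>
      subst hy
      have hex := hc x
      rw [hq] at hex
      cases hx : e x with
      | inr a => simp [hx] at hex
      | inl p =>
        obtain rfl : Prod.map h h p = _ := by simpa [hx] using hex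
        rcases hy' with rfl | rfl
        exacts [.node hx (.inl rfl) (ih rfl), .node hx (.inr rfl) (ih rfl)]
  · intro he
    induction he with
    | leaf hb => exact .leaf (by rw [← hc, hb]; rfl)
    | node hp hy _ ih => exact .node (by rw [← hc, hp]; rfl) (hy.imp (congrArg h) (congrArg h)) ih

theorem isLeafOf_map_iff {C : Type} {e : X → (X × X) ⊕ B} {k : B → C} {x : X} {c : C} :
    IsLeafOf (fun x => Sum.map id k (e x)) x c ↔ ∃ b, IsLeafOf e x b ∧ k b = c := by
  constructor
  · intro h
    induction h with
    | @leaf x c hc =>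
      cases hx : e x with
      | inl p => simp [hx] at hc
      | inr b => exact ⟨b, .leaf hx, by simpa [hx] using hc⟩
    | @node x y p c hp hy _ ih =>
      obtain ⟨b, hb, rfl⟩ := ih
      cases hx : e x with
      | inl p' =>
        obtain rfl : p' = p := by simpa [hx] using hp
        exact ⟨b, .node hx hy hb, rfl⟩
      | inr b' => simp [hx] at hp
  · rintro ⟨b, hb, rfl⟩
    induction hb with
    | leaf hx => exact .leaf (by simp [hx])
    | node hx hy _ ih => exact .node (by simp [hx]) hy ih

end FlatEquation

def BTree.step {A : Type} (t : BTree A) : (BTree A × BTree A) ⊕ A :=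
  match PFunctor.M.dest t with
  | ⟨.inl (), c⟩ => .inl (c true, c false)
  | ⟨.inr a, _⟩ => .inr a

section BTree
variable {A : Type} {t : BTree A} {a : A}

theorem BTree.step_of_dest_inl {c : Bool → BTree A}
    (h : PFunctor.M.dest t = ⟨.inl (), c⟩) : t.step = .inl (c true, c false) := by
  rw [BTree.step, h]

theorem BTree.step_of_dest_inr {c : Empty → BTree A}
    (h : PFunctor.M.dest t = ⟨.inr a, c⟩) : t.step = .inr a := by
  rw [BTree.step, h]

theorem IsLeaf.of_dest_eq {s : Unit ⊕ A} {c : (treeP A).B s → BTree A}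
    (h : PFunctor.M.dest t = ⟨s, c⟩) (b : (treeP A).B s) (hb : IsLeaf (c b) a) :
    IsLeaf t a := by
  have := IsLeaf.node t a
  rw [h] at this
  exact this b hb

theorem isLeaf_iff_isLeafOf_step : IsLeaf t a ↔ IsLeafOf BTree.step t a := by
  constructor
  · intro h
    induction h with
    | leaf t a ha =>
      refine .leaf ?_
      rcases hd : PFunctor.M.dest t with ⟨_ | a', c⟩
      · simp [hd] at ha
      · rw [hd] at ha
        rw [BTree.step_of_dest_inr hd, Sum.inr.inj ha]
    | node t a b _ ih =>
      revert b
      rcases hd : PFunctor.M.dest t with ⟨⟨⟩ | a', c⟩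
      · rintro b - ih
        exact .node (BTree.step_of_dest_inl hd) (by cases b; exacts [.inr rfl, .inl rfl]) ih
      · rintro ⟨⟩
  · intro h
    induction h with
    | @leaf t a ha =>
      rcases hd : PFunctor.M.dest t with ⟨⟨⟩ | a', c⟩
      · simp [BTree.step_of_dest_inl hd] at ha
      · rw [BTree.step_of_dest_inr hd] at ha
        cases ha
        exact .leaf _ _ (by rw [hd])
    | @node t u p a hp hu _ ih =>
      rcases hd : PFunctor.M.dest t with ⟨⟨⟩ | a', c⟩
      · rw [BTree.step_of_dest_inl hd, Sum.inl.injEq] at hp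
        subst hp
        rcases hu with rfl | rfl
        exacts [ih.of_dest_eq hd true, ih.of_dest_eq hd false]
      · simp [BTree.step_of_dest_inr hd] at hp

end BTree

theorem treeSol_hom {A X : Type} (e : X → (X × X) ⊕ A) (x : X) :
    Sum.map (Prod.map (treeSol e) (treeSol e)) id (e x) = BTree.step (treeSol e x) := by
  unfold BTree.step treeSol
  rw [PFunctor.M.dest_corec]
  unfold treeStep
  cases e x <;> rfl

theorem isLeaf_treeSol_iff {A X : Type} {e : X → (X × X) ⊕ A} {x : X} {a : A} :
    IsLeaf (treeSol e x) a ↔ IsLeafOf e x a :=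
  isLeaf_iff_isLeafOf_step.trans (isLeafOf_iff_of_hom (treeSol_hom e))

section prodPlus
variable {X Y A : Type} {e : X → (X × X) ⊕ Y} {f : Y → (Y × Y) ⊕ A}

variable (e) in
theorem isLeafOf_prodPlus_inr_iff {y : Y} {a : A} :
    IsLeafOf (prodPlus e f) (.inr y) a ↔ IsLeafOf f y a :=
  isLeafOf_iff_of_hom (e := f) (f := prodPlus e f) (h := Sum.inr) fun _ => rfl

theorem prodPlus_inl_of_inr {x : X} {y : Y} (hx : e x = .inr y) :
    prodPlus e f (.inl x) = prodPlus e f (.inr y) := by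
  simp [prodPlus, hx]

theorem prodPlus_inl_of_inl {x : X} {p : X × X} (hx : e x = .inl p) :
    prodPlus e f (.inl x) = .inl (.inl p.1, .inl p.2) := by
  simp [prodPlus, hx]

theorem isLeafOf_prodPlus_inl_iff {x : X} {a : A} :
    IsLeafOf (prodPlus e f) (.inl x) a ↔ ∃ y, IsLeafOf e x y ∧ IsLeafOf f y a := by
  constructor
  · generalize hs : Sum.inl x = s
    intro h
    induction h generalizing x with
    | leaf hl =>
      subst hs
      cases hx : e x with
      | inl p => simp [prodPlus_inl_of_inl hx] at hl
      | inr y =>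
        refine ⟨y, .leaf hx, (isLeafOf_prodPlus_inr_iff e).1 (.leaf ?_)⟩
        rwa [← prodPlus_inl_of_inr hx]
    | node hp hu hl ih =>
      subst hs
      cases hx : e x with
      | inl p =>
        rw [prodPlus_inl_of_inl hx, Sum.inl.injEq] at hp
        subst hp
        rcases hu with rfl | rfl <;> obtain ⟨y, hy, ha⟩ := ih rfl
        exacts [⟨y, .node hx (.inl rfl) hy, ha⟩, ⟨y, .node hx (.inr rfl) hy, ha⟩]
      | inr y =>
        refine ⟨y, .leaf hx, (isLeafOf_prodPlus_inr_iff e).1 ?_⟩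
        exact (isLeafOf_congr (prodPlus_inl_of_inr hx)).1 (.node hp hu hl)
  · rintro ⟨y, hy, ha⟩
    induction hy with
    | leaf hx =>
      exact (isLeafOf_congr (prodPlus_inl_of_inr hx)).2 ((isLeafOf_prodPlus_inr_iff e).2 ha)
    | node hx hu _ ih =>
      exact .node (prodPlus_inl_of_inl hx) (hu.imp (congrArg Sum.inl) (congrArg Sum.inl)) (ih ha)

end prodPlus

theorem sSup_setOf_exists_sSup {A I : Type} [CompleteLattice A] (p : I → Prop) (s : I → Set A) :
    sSup {a | ∃ i, p i ∧ sSup (s i) = a} = sSup {a | ∃ i, p i ∧ a ∈ s i} :=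
  le_antisymm (sSup_le fun _ ⟨i, hi, ha⟩ => ha ▸ sSup_le fun _ hb => le_sSup ⟨i, hi, hb⟩)
    (sSup_le fun _ ⟨i, hi, ha⟩ => (le_sSup ha).trans (le_sSup ⟨i, hi, rfl⟩))

def leafJoinElgot (A : Type) [CompleteLattice A] : ProdCompleteElgot A (fun p => p.1 ⊔ p.2) where
  sol X e x := sSup {a | IsLeafOf e x a}
  isSol X e x := by
    cases hx : e x with
    | inl p => rw [setOf_isLeafOf_of_inl hx, sSup_union]; rfl
    | inr a => rw [setOf_isLeafOf_of_inr hx, sSup_singleton]; rfl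
  functorial X Y e f h hc x := by simp only [isLeafOf_iff_of_hom hc]
  compositional X Y e f x := by
    simp only [isLeafOf_map_iff, isLeafOf_prodPlus_inl_iff]
    exact sSup_setOf_exists_sSup _ _

/-- Every complete lattice `A` is a complete Elgot algebra for `H X = X × X` on
`Set`, with algebra map the binary join, where the solution of a flat equation
morphism `e` at `x` is `α ∘ ê`: the join of all leaf labels of the binary tree
`ê x ∈ TA`, `ê` being the unique solution of `e` in the free completely
iterative algebra `TA` of all binary trees over `A`. -/
theorem completeLattice_complete_elgot {A : Type} [CompleteLattice A] :
    ∃ E : ProdCompleteElgot A (fun p => p.1 ⊔ p.2),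
      ∀ (X : Type) (e : X → (X × X) ⊕ A) (x : X),
        E.sol X e x = sSup {a | IsLeaf (treeSol e x) a} :=
  ⟨leafJoinElgot A, fun _ _ _ => by simp only [isLeaf_treeSol_iff]; rfl⟩
end
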